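/- arXiv:1004.0918 — 4 statements merged into one kernel-verified Lean document; each statement's English description precedes it below -/
import Mathlib

section
/- Let k be a commutative ring and A a non-unital k-algebra equipped with an internal ℕ-grading: k-submodules 𝒜ₙ (n ∈ ℕ) forming an internal direct sum decomposition A = ⊕ₙ 𝒜ₙ with 𝒜ₙ·𝒜ₘ ⊆ 𝒜ₙ₊ₘ. Then the inclusion ι : 𝒜₀ → A is an elementary homotopy equivalence: the degree-zero projection π : A → 𝒜₀ is a non-unital k-algebra homomorphism with π∘ι = id, and the map A → A[x] sending each homogeneous element aₙ ∈ 𝒜ₙ to aₙ·xⁿ is a non-unital k-algebra homomorphism exhibiting an elementary homotopy between ι∘π and id_A. -/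
noncomputable section

namespace NUPolyAux

/-! Auxiliary constructions at the level of finitely supported functions. -/

variable {R : Type*} [NonUnitalRing R]

/-- Convolution product of coefficient sequences. -/
def mulF (p q : ℕ →₀ R) : ℕ →₀ R :=
  p.sum fun i a => q.sum fun j b => Finsupp.single (i + j) (a * b)

/-- Interpretation of a coefficient sequence as a polynomial over the
unitization of `R`. -/
def toPUF (p : ℕ →₀ R) : Polynomial (Unitization ℤ R) :=
  p.sum fun i a => Polynomial.monomial i (Unitization.inr a)

theorem toPUF_single (i : ℕ) (a : R) :
    toPUF (Finsupp.single i a) = Polynomial.monomial i (Unitization.inr a) := by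
  rw [toPUF, Finsupp.sum_single_index]
  simp

theorem coeff_toPUF (p : ℕ →₀ R) (n : ℕ) :
    (toPUF p).coeff n = Unitization.inr (p n) := by
  classical
  rw [toPUF, Finsupp.sum, Polynomial.finset_sum_coeff]
  simp only [Polynomial.coeff_monomial]
  rw [Finset.sum_ite_eq' p.support n fun i => Unitization.inr (p i)]
  split
  · rfl
  · next h => rw [Finsupp.notMem_support_iff.mp h, Unitization.inr_zero]

theorem toPUF_injective : Function.Injective (toPUF (R := R)) := by
  intro p q h
  ext n
  apply Unitization.inr_injective (R := ℤ)
  rw [← coeff_toPUF, ← coeff_toPUF, h]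

theorem toPUF_zero : toPUF (0 : ℕ →₀ R) = 0 := by
  refine Polynomial.ext fun n => ?_
  rw [coeff_toPUF, Finsupp.zero_apply, Unitization.inr_zero, Polynomial.coeff_zero]

theorem toPUF_add (p q : ℕ →₀ R) : toPUF (p + q) = toPUF p + toPUF q := by
  refine Polynomial.ext fun n => ?_
  rw [coeff_toPUF, Polynomial.coeff_add, coeff_toPUF, coeff_toPUF,
    Finsupp.add_apply, Unitization.inr_add]

/-- `toPUF` as an additive monoid homomorphism. -/
def toPUFHom : (ℕ →₀ R) →+ Polynomial (Unitization ℤ R) where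
  toFun := toPUF
  map_zero' := toPUF_zero
  map_add' := toPUF_add

@[simp] theorem toPUFHom_apply (p : ℕ →₀ R) : toPUFHom p = toPUF p := rfl

theorem toPUF_mulF (p q : ℕ →₀ R) : toPUF (mulF p q) = toPUF p * toPUF q := by
  classical
  have h1 : toPUF (mulF p q)
      = p.sum fun i a => q.sum fun j b =>
          Polynomial.monomial (i + j) (Unitization.inr (a * b)) := by
    rw [mulF, ← toPUFHom_apply, map_finsuppSum]
    refine Finsupp.sum_congr fun i _ => ?_
    rw [map_finsuppSum]
    exact Finsupp.sum_congr fun j _ => toPUF_single _ _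
  rw [h1, toPUF, toPUF, Finsupp.sum_mul]
  refine Finsupp.sum_congr fun i _ => ?_
  rw [Finsupp.mul_sum]
  refine Finsupp.sum_congr fun j _ => ?_
  rw [Polynomial.monomial_mul_monomial, Unitization.inr_mul]

end NUPolyAux

/-- The non-unital polynomial algebra `R[x]` over a non-unital ring `R`:
the type of finitely supported coefficient sequences (i.e. of
`AddMonoidAlgebra R ℕ`) equipped with the convolution product. -/
structure NUPoly (R : Type*) [NonUnitalRing R] where
  /-- the coefficient sequence of a non-unital polynomial -/
  toFinsupp : ℕ →₀ R

namespace NUPoly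

open NUPolyAux

variable {R : Type*} [NonUnitalRing R]

theorem toFinsupp_injective :
    Function.Injective (toFinsupp : NUPoly R → (ℕ →₀ R)) := by
  rintro ⟨p⟩ ⟨q⟩ h
  simpa using h

instance instZero : Zero (NUPoly R) := ⟨⟨0⟩⟩
instance instAdd : Add (NUPoly R) := ⟨fun p q => ⟨p.toFinsupp + q.toFinsupp⟩⟩
instance instNeg : Neg (NUPoly R) := ⟨fun p => ⟨-p.toFinsupp⟩⟩
instance instSub : Sub (NUPoly R) := ⟨fun p q => ⟨p.toFinsupp - q.toFinsupp⟩⟩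
instance instSMul {S : Type*} [SMulZeroClass S R] : SMul S (NUPoly R) :=
  ⟨fun c p => ⟨c • p.toFinsupp⟩⟩
instance instMul : Mul (NUPoly R) := ⟨fun p q => ⟨mulF p.toFinsupp q.toFinsupp⟩⟩

@[simp] theorem toFinsupp_zero : (0 : NUPoly R).toFinsupp = 0 := rfl
@[simp] theorem toFinsupp_add (p q : NUPoly R) :
    (p + q).toFinsupp = p.toFinsupp + q.toFinsupp := rfl
@[simp] theorem toFinsupp_smul {S : Type*} [SMulZeroClass S R] (c : S) (p : NUPoly R) :
    (c • p).toFinsupp = c • p.toFinsupp := rfl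
@[simp] theorem toFinsupp_mul (p q : NUPoly R) :
    (p * q).toFinsupp = mulF p.toFinsupp q.toFinsupp := rfl

instance instAddCommGroup : AddCommGroup (NUPoly R) :=
  toFinsupp_injective.addCommGroup toFinsupp rfl (fun _ _ => rfl) (fun _ => rfl)
    (fun _ _ => rfl) (fun _ _ => rfl) (fun _ _ => rfl)

/-- The interpretation of `p ∈ R[x]` as a polynomial over the unitization of `R`. -/
def toPU (p : NUPoly R) : Polynomial (Unitization ℤ R) := toPUF p.toFinsupp

theorem toPU_injective : Function.Injective (toPU (R := R)) :=
  fun _ _ h => toFinsupp_injective (toPUF_injective h)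

theorem toPU_zero : toPU (0 : NUPoly R) = 0 := toPUF_zero
theorem toPU_add (p q : NUPoly R) : toPU (p + q) = toPU p + toPU q := toPUF_add _ _
theorem toPU_mul (p q : NUPoly R) : toPU (p * q) = toPU p * toPU q := toPUF_mulF _ _

instance instNonUnitalRing : NonUnitalRing (NUPoly R) :=
  { instAddCommGroup, instMul with
    left_distrib := fun p q r => toPU_injective <| by
      rw [toPU_mul, toPU_add, toPU_add, toPU_mul, toPU_mul, mul_add]
    right_distrib := fun p q r => toPU_injective <| by
      rw [toPU_mul, toPU_add, toPU_add, toPU_mul, toPU_mul, add_mul]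
    zero_mul := fun p => toPU_injective <| by
      rw [toPU_mul, toPU_zero, zero_mul]
    mul_zero := fun p => toPU_injective <| by
      rw [toPU_mul, toPU_zero, mul_zero]
    mul_assoc := fun p q r => toPU_injective <| by
      rw [toPU_mul, toPU_mul, toPU_mul, toPU_mul, mul_assoc] }

theorem mul_def (p q : NUPoly R) :
    (p * q).toFinsupp
      = p.toFinsupp.sum fun i a => q.toFinsupp.sum fun j b =>
          Finsupp.single (i + j) (a * b) := rfl

theorem mul_apply (p q : NUPoly R) (n : ℕ) :
    (p * q).toFinsupp n = ∑ x ∈ Finset.HasAntidiagonal.antidiagonal n, p.toFinsupp x.1 * q.toFinsupp x.2 := by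
  apply Unitization.inr_injective (R := ℤ)
  have h : (Unitization.inr ((p * q).toFinsupp n) : Unitization ℤ R)
      = ∑ x ∈ Finset.HasAntidiagonal.antidiagonal n,
          (Unitization.inr (p.toFinsupp x.1) * Unitization.inr (q.toFinsupp x.2) :
            Unitization ℤ R) := by
    rw [← coeff_toPUF, ← toPU, toPU_mul, Polynomial.coeff_mul]
    exact Finset.sum_congr rfl fun x _ => by
      rw [toPU, toPU, coeff_toPUF, coeff_toPUF]
  rw [h]
  simp only [← Unitization.inr_mul]
  exact (map_sum (Unitization.inrHom ℤ ℤ R) (fun x : ℕ × ℕ => p.toFinsupp x.1 * q.toFinsupp x.2)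
    (Finset.HasAntidiagonal.antidiagonal n)).symm

section Module

variable {k : Type*} [Semiring k] [Module k R]

/-- `toFinsupp` as an additive monoid homomorphism. -/
def toFinsuppAddHom : NUPoly R →+ (ℕ →₀ R) where
  toFun := toFinsupp
  map_zero' := rfl
  map_add' := fun _ _ => rfl

instance instModule : Module k (NUPoly R) :=
  Function.Injective.module k toFinsuppAddHom toFinsupp_injective fun _ _ => rfl

end Module

section Scalars

variable (k : Type*) [CommRing k] [Module k R]

instance instIsScalarTower [IsScalarTower k R R] :
    IsScalarTower k (NUPoly R) (NUPoly R) := by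
  refine ⟨fun c p q => ?_⟩
  rw [smul_eq_mul, smul_eq_mul]
  apply toFinsupp_injective
  simp only [toFinsupp_mul, toFinsupp_smul]
  rw [mulF, mulF, Finsupp.sum_smul_index' (by simp), Finsupp.smul_sum]
  refine Finsupp.sum_congr fun i _ => ?_
  rw [Finsupp.smul_sum]
  refine Finsupp.sum_congr fun j _ => ?_
  rw [smul_mul_assoc, Finsupp.smul_single]

instance instSMulCommClass [SMulCommClass k R R] :
    SMulCommClass k (NUPoly R) (NUPoly R) := by
  refine ⟨fun c p q => ?_⟩
  rw [smul_eq_mul, smul_eq_mul]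
  apply toFinsupp_injective
  simp only [toFinsupp_mul, toFinsupp_smul]
  rw [mulF, mulF, Finsupp.smul_sum]
  refine Finsupp.sum_congr fun i _ => ?_
  rw [Finsupp.sum_smul_index' (by simp), Finsupp.smul_sum]
  refine Finsupp.sum_congr fun j _ => ?_
  rw [mul_smul_comm, Finsupp.smul_single]

end Scalars

/-- The non-unital polynomial `r·xⁱ`. -/
def single (i : ℕ) (a : R) : NUPoly R := ⟨Finsupp.single i a⟩

/-- Evaluation at `x = 0` (the constant coefficient), as a non-unital algebra
homomorphism `∂⁰ : R[x] → R`. -/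
def atZero (k R : Type*) [CommRing k] [NonUnitalRing R] [Module k R] :
    NUPoly R →ₙₐ[k] R where
  toFun p := p.toFinsupp 0
  map_add' p q := by
    show (p + q).toFinsupp 0 = p.toFinsupp 0 + q.toFinsupp 0
    rw [toFinsupp_add, Finsupp.add_apply]
  map_smul' c p := by
    show (c • p).toFinsupp 0 = c • p.toFinsupp 0
    rw [toFinsupp_smul, Finsupp.smul_apply]
  map_zero' := rfl
  map_mul' p q := by
    show (p * q).toFinsupp 0 = p.toFinsupp 0 * q.toFinsupp 0
    rw [mul_apply, Finset.Nat.antidiagonal_zero, Finset.sum_singleton]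

/-- Evaluation at `x = 1` (the sum of the coefficients), as a non-unital algebra
homomorphism `∂¹ : R[x] → R`. -/
def coeffSum (k R : Type*) [CommRing k] [NonUnitalRing R] [Module k R] :
    NUPoly R →ₙₐ[k] R where
  toFun p := p.toFinsupp.sum fun _ a => a
  map_add' p q := by
    show ((p + q).toFinsupp.sum fun _ a => a)
      = (p.toFinsupp.sum fun _ a => a) + q.toFinsupp.sum fun _ a => a
    rw [toFinsupp_add]
    exact Finsupp.sum_add_index' (fun _ => rfl) (fun _ _ _ => rfl)
  map_smul' c p := by
    show ((c • p).toFinsupp.sum fun _ a => a) = c • p.toFinsupp.sum fun _ a => a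
    rw [toFinsupp_smul]
    have h1 : ((c • p.toFinsupp).sum fun _ a => a) = p.toFinsupp.sum fun _ a => c • a :=
      Finsupp.sum_smul_index' (h := fun (_ : ℕ) (a : R) => a) (fun _ => rfl)
    have h2 : (c • p.toFinsupp.sum fun _ a => a) = p.toFinsupp.sum fun _ a => c • a :=
      Finsupp.smul_sum
    rw [h1, h2]
  map_zero' := by
    show ((0 : NUPoly R).toFinsupp.sum fun _ a => a) = 0
    rw [toFinsupp_zero]
    exact Finsupp.sum_zero_index
  map_mul' p q := by
    classical
    show ((p * q).toFinsupp.sum fun _ a => a)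
      = (p.toFinsupp.sum fun _ a => a) * q.toFinsupp.sum fun _ a => a
    rw [mul_def, Finsupp.sum_sum_index (fun _ => rfl) (fun _ _ _ => rfl)]
    have h1 : (p.toFinsupp.sum fun i a =>
          (q.toFinsupp.sum fun j b => Finsupp.single (i + j) (a * b)).sum fun _ c => c)
        = p.toFinsupp.sum fun i a => q.toFinsupp.sum fun j b => a * b := by
      refine Finsupp.sum_congr fun i _ => ?_
      rw [Finsupp.sum_sum_index (fun _ => rfl) (fun _ _ _ => rfl)]
      exact Finsupp.sum_congr fun j _ => Finsupp.sum_single_index rfl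
    have h2 : (p.toFinsupp.sum fun i a => q.toFinsupp.sum fun j b => a * b)
        = p.toFinsupp.sum fun i a => a * q.toFinsupp.sum fun _ b => b :=
      Finsupp.sum_congr fun i _ => (Finsupp.mul_sum _ _).symm
    rw [h1, h2, ← Finsupp.sum_mul]

@[simp] theorem atZero_apply (k : Type*) [CommRing k] [Module k R] (p : NUPoly R) :
    atZero k R p = p.toFinsupp 0 := rfl

@[simp] theorem coeffSum_apply (k : Type*) [CommRing k] [Module k R] (p : NUPoly R) :
    coeffSum k R p = p.toFinsupp.sum fun _ a => a := rfl

end NUPoly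

section Homotopy

variable (k : Type*) [CommRing k]
variable {A B : Type*} [NonUnitalRing A] [Module k A] [NonUnitalRing B] [Module k B]

/-- Two non-unital algebra homomorphisms `f₀ f₁ : A → B` are *elementary homotopic*
if there is a homomorphism `H : A → B[x]` with `∂⁰ ∘ H = f₀` and `∂¹ ∘ H = f₁`. -/
def ElemHomotopic (f₀ f₁ : A →ₙₐ[k] B) : Prop :=
  ∃ H : A →ₙₐ[k] NUPoly B,
    (NUPoly.atZero k B).comp H = f₀ ∧ (NUPoly.coeffSum k B).comp H = f₁

/-- *Homotopy* of non-unital algebra homomorphisms: the equivalence relation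
generated by elementary homotopy. -/
def NUHomotopic (f₀ f₁ : A →ₙₐ[k] B) : Prop :=
  Relation.EqvGen (ElemHomotopic k) f₀ f₁

end Homotopy

/-! The homotopy is `a ↦ ∑ₙ aₙ xⁿ`, where `aₙ` are the homogeneous components of `a`. It is
multiplicative because `𝒜 n * 𝒜 m ⊆ 𝒜 (n + m)` matches `xⁿ xᵐ = xⁿ⁺ᵐ`; evaluating at `x = 0`
keeps only `a₀`, and evaluating at `x = 1` gives back `∑ₙ aₙ = a`. -/

namespace NUPoly

variable {R : Type*} [NonUnitalRing R]

@[simp] theorem toFinsupp_single (i : ℕ) (a : R) :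
    (single i a).toFinsupp = Finsupp.single i a := rfl

theorem single_mul_single (i j : ℕ) (a b : R) :
    single i a * single j b = single (i + j) (a * b) := by
  apply toFinsupp_injective
  rw [toFinsupp_mul, toFinsupp_single, toFinsupp_single, toFinsupp_single, NUPolyAux.mulF,
    Finsupp.sum_single_index (by simp), Finsupp.sum_single_index (by simp)]

variable (k : Type*)

def lsingle [Semiring k] [Module k R] (i : ℕ) : R →ₗ[k] NUPoly R where
  toFun := single i
  map_add' a b := toFinsupp_injective <| by simp [Finsupp.single_add]
  map_smul' c a := toFinsupp_injective <| by simp [Finsupp.smul_single]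

variable [CommRing k] [Module k R]

theorem atZero_single (i : ℕ) (a : R) :
    atZero k R (single i a) = if i = 0 then a else 0 :=
  Finsupp.single_apply

theorem coeffSum_single (i : ℕ) (a : R) : coeffSum k R (single i a) = a := by
  rw [coeffSum_apply, toFinsupp_single, Finsupp.sum_single_index rfl]

end NUPoly

section GradedToNUPoly

open DirectSum NUPoly

variable {k A : Type*} [NonUnitalRing A]

section Semiring

variable [Semiring k] [Module k A] (𝒜 : ℕ → Submodule k A) [Decomposition 𝒜]

def gradedToNUPolyLinearMap : A →ₗ[k] NUPoly A :=
  toModule k ℕ (NUPoly A) (fun n => lsingle k n ∘ₗ (𝒜 n).subtype) ∘ₗ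
    (decomposeLinearEquiv 𝒜).toLinearMap

theorem gradedToNUPolyLinearMap_of_mem {n : ℕ} {a : A} (ha : a ∈ 𝒜 n) :
    gradedToNUPolyLinearMap 𝒜 a = single n a := by
  rw [gradedToNUPolyLinearMap, LinearMap.comp_apply, LinearEquiv.coe_coe,
    show a = ((⟨a, ha⟩ : 𝒜 n) : A) from rfl, decomposeLinearEquiv_apply_coe, toModule_lof]
  rfl

variable [SetLike.GradedMul 𝒜]

theorem gradedToNUPolyLinearMap_mul (a b : A) :
    gradedToNUPolyLinearMap 𝒜 (a * b) =
      gradedToNUPolyLinearMap 𝒜 a * gradedToNUPolyLinearMap 𝒜 b := by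
  induction a using Decomposition.inductionOn 𝒜 with
  | zero => simp
  | add a a' ha ha' => rw [add_mul, map_add, map_add, add_mul, ha, ha']
  | @homogeneous n x =>
    induction b using Decomposition.inductionOn 𝒜 with
    | zero => simp
    | add b b' hb hb' => rw [mul_add, map_add, map_add, mul_add, hb, hb']
    | @homogeneous m y =>
      rw [gradedToNUPolyLinearMap_of_mem 𝒜 x.2, gradedToNUPolyLinearMap_of_mem 𝒜 y.2,
        gradedToNUPolyLinearMap_of_mem 𝒜 (SetLike.mul_mem_graded x.2 y.2), single_mul_single]

def gradedToNUPoly : A →ₙₐ[k] NUPoly A :=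
  { gradedToNUPolyLinearMap 𝒜 with
    map_zero' := (gradedToNUPolyLinearMap 𝒜).map_zero
    map_mul' := gradedToNUPolyLinearMap_mul 𝒜 }

theorem gradedToNUPoly_of_mem {n : ℕ} {a : A} (ha : a ∈ 𝒜 n) :
    gradedToNUPoly 𝒜 a = single n a :=
  gradedToNUPolyLinearMap_of_mem 𝒜 ha

end Semiring

variable [CommRing k] [Module k A] (𝒜 : ℕ → Submodule k A) [Decomposition 𝒜]
  [SetLike.GradedMul 𝒜]

theorem atZero_gradedToNUPoly (a : A) :
    atZero k A (gradedToNUPoly 𝒜 a) = (decompose 𝒜 a 0 : A) := by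
  induction a using Decomposition.inductionOn 𝒜 with
  | zero => simp
  | add a a' ha ha' =>
    rw [map_add, map_add, ha, ha', decompose_add, DirectSum.add_apply, Submodule.coe_add]
  | @homogeneous n x =>
    rw [gradedToNUPoly_of_mem 𝒜 x.2, atZero_single]
    rcases eq_or_ne n 0 with rfl | hn
    · rw [if_pos rfl, decompose_of_mem_same 𝒜 x.2]
    · rw [if_neg hn, decompose_of_mem_ne 𝒜 x.2 hn]

theorem coeffSum_comp_gradedToNUPoly :
    (coeffSum k A).comp (gradedToNUPoly 𝒜) = NonUnitalAlgHom.id k A := by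
  ext a
  induction a using Decomposition.inductionOn 𝒜 with
  | zero => simp
  | add a a' ha ha' => simp only [map_add, ha, ha']
  | @homogeneous n x =>
    rw [NonUnitalAlgHom.comp_apply, gradedToNUPoly_of_mem 𝒜 x.2, coeffSum_single]
    rfl

end GradedToNUPoly

theorem graded_inclusion_elementary_homotopy_equivalence_general
    (k : Type*) [CommRing k] (A : Type*)
    [NonUnitalRing A] [Module k A]
    (𝒜 : ℕ → Submodule k A) [SetLike.GradedMul 𝒜] [DirectSum.Decomposition 𝒜] :
    ∃ e : A →ₙₐ[k] A,
      (∀ a : A, e a = (DirectSum.decompose 𝒜 a 0 : A)) ∧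
      (∀ a ∈ 𝒜 0, e a = a) ∧
      ∃ H : A →ₙₐ[k] NUPoly A,
        (∀ (n : ℕ), ∀ a ∈ 𝒜 n, H a = NUPoly.single n a) ∧
        (NUPoly.atZero k A).comp H = e ∧
        (NUPoly.coeffSum k A).comp H = NonUnitalAlgHom.id k A := by
  refine ⟨(NUPoly.atZero k A).comp (gradedToNUPoly 𝒜), atZero_gradedToNUPoly 𝒜, fun a ha => ?_,
    gradedToNUPoly 𝒜, fun _ _ => gradedToNUPoly_of_mem 𝒜, rfl, coeffSum_comp_gradedToNUPoly 𝒜⟩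
  rw [NonUnitalAlgHom.comp_apply, atZero_gradedToNUPoly, DirectSum.decompose_of_mem_same 𝒜 ha]

/-- Let `k` be a commutative ring and `A` a non-unital
`k`-algebra equipped with an internal `ℕ`-grading: `k`-submodules `𝒜 n`
forming an internal direct sum decomposition `A = ⊕ₙ 𝒜 n` with
`𝒜 n * 𝒜 m ⊆ 𝒜 (n + m)`.  Then the inclusion `ι : 𝒜 0 → A` is an elementary
homotopy equivalence: the degree-zero projection `π : A → 𝒜 0` is a non-unital
`k`-algebra homomorphism with `π ∘ ι = id` (here encoded by the composite
`e = ι ∘ π : A → A`, a non-unital algebra homomorphism sending `a` to its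
degree-zero component, which is the identity on `𝒜 0`), and the map `A → A[x]`
sending each homogeneous element `aₙ ∈ 𝒜 n` to `aₙ·xⁿ` is a non-unital
`k`-algebra homomorphism exhibiting an elementary homotopy between `ι ∘ π` and
`id`. -/
theorem graded_inclusion_elementary_homotopy_equivalence
    (k : Type*) [CommRing k] (A : Type*)
    [NonUnitalRing A] [Module k A] [SMulCommClass k A A] [IsScalarTower k A A]
    (𝒜 : ℕ → Submodule k A) [SetLike.GradedMul 𝒜] [DirectSum.Decomposition 𝒜] :
    ∃ e : A →ₙₐ[k] A,
      (∀ a : A, e a = (DirectSum.decompose 𝒜 a 0 : A)) ∧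
      (∀ a ∈ 𝒜 0, e a = a) ∧
      ∃ H : A →ₙₐ[k] NUPoly A,
        (∀ (n : ℕ), ∀ a ∈ 𝒜 n, H a = NUPoly.single n a) ∧
        (NUPoly.atZero k A).comp H = e ∧
        (NUPoly.coeffSum k A).comp H = NonUnitalAlgHom.id k A :=
  graded_inclusion_elementary_homotopy_equivalence_general k A 𝒜
end
end

section
/- Let k be a commutative ring and M a k-module. There exists a (unique) k-algebra homomorphism τ : TensorAlgebra k M → Polynomial (TensorAlgebra k M) with τ(ι m) = C(ι m)·X for all m ∈ M, and it satisfies: (i) for every a ∈ TensorAlgebra k M, the sum of the coefficients of τ(a) (evaluation at X = 1) equals a; (ii) the constant coefficient of τ(a) (evaluation at X = 0) equals algebraMap k (TensorAlgebra k M) (ε a), where ε is the augmentation. In particular, for every a in the augmentation ideal ker ε (the non-unital tensor algebra T(M) = ⊕_{n≥1} M^{⊗n}), the constant coefficient of τ(a) is 0 while its coefficient sum is a, so τ is a polynomial contraction of ker ε: the zero map and the identity of ker ε are elementary homotopic. Moreover τ is natural: for every k-linear map g : M → N one has Polynomial.map(T(g)) ∘ τ_M = τ_N ∘ T(g), where T(g)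 : TensorAlgebra k M → TensorAlgebra k N is the induced algebra homomorphism with T(g)(ι m) = ι(g m). -/
noncomputable section

/-- The augmentation ideal `ker ε ⊆ TensorAlgebra k M` (the non-unital tensor
algebra `T(M) = ⊕_{n ≥ 1} M^⊗ⁿ`), as a non-unital subalgebra.  Here
`ε = TensorAlgebra.algebraMapInv` is the augmentation, the unique `k`-algebra
homomorphism with `ε ∘ ι = 0`. -/
noncomputable def augIdeal (k : Type*) [CommRing k] (M : Type*) [AddCommGroup M]
    [Module k M] : NonUnitalSubalgebra k (TensorAlgebra k M) where
  carrier := {a | TensorAlgebra.algebraMapInv (M := M) a = 0}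
  add_mem' := fun {p q} hp hq => by
    simp only [Set.mem_setOf_eq] at *
    rw [map_add, hp, hq, add_zero]
  zero_mem' := by simp only [Set.mem_setOf_eq, map_zero]
  mul_mem' := fun {p q} hp hq => by
    simp only [Set.mem_setOf_eq] at *
    rw [map_mul, hp, zero_mul]
  smul_mem' := fun c p hp => by
    simp only [Set.mem_setOf_eq] at *
    rw [map_smul, hp, smul_zero]

/-! `τ` is the grading operator of the tensor algebra: it sends a tensor `a` of degree `n` to
`C a * Xⁿ`. Hence `τ a` evaluates to `a` at `X = 1` and to its degree-zero part `ε a` at `X = 0`;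
both are identities of algebra maps out of `TensorAlgebra k M`, so it suffices to check them on the
generators `ι m`. Applying `ε` coefficientwise turns `τ a` into `C (ε a)`, so every coefficient of
`τ a` lies in `ker ε` when `a` does, and `τ` restricts to a non-unital polynomial homotopy on
`ker ε`. -/

open Polynomial

namespace NUPoly

variable {k A : Type*} [CommRing k] [Ring A] [Algebra k A] {S : NonUnitalSubalgebra k A}

variable (S) in
def toPolynomial : NUPoly S →ₙₐ[k] A[X] where
  toFun p := ⟨⟨p.toFinsupp.mapRange Subtype.val rfl⟩⟩
  map_smul' _ _ := Polynomial.ext fun _ => rfl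
  map_zero' := rfl
  map_add' _ _ := Polynomial.ext fun _ => rfl
  map_mul' p q := Polynomial.ext fun n => by
    rw [coeff_mul]
    change ((p * q).toFinsupp n : A) =
      ∑ x ∈ Finset.HasAntidiagonal.antidiagonal n, (p.toFinsupp x.1 : A) * q.toFinsupp x.2
    rw [mul_apply]
    push_cast
    rfl

@[simp]
theorem coeff_toPolynomial (p : NUPoly S) (i : ℕ) :
    (toPolynomial S p).coeff i = p.toFinsupp i :=
  rfl

theorem toPolynomial_injective : Function.Injective (toPolynomial S) :=
  fun _ _ h => toFinsupp_injective <| Finsupp.ext fun i =>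
    Subtype.ext <| by simpa using congr_arg (coeff · i) h

theorem coe_atZero (p : NUPoly S) : (atZero k S p : A) = (toPolynomial S p).coeff 0 :=
  rfl

theorem coe_coeffSum (p : NUPoly S) : (coeffSum k S p : A) = (toPolynomial S p).eval 1 := by
  rw [coeffSum_apply, Finsupp.sum, AddSubmonoidClass.coe_finsetSum, eval_eq_sum,
    Polynomial.sum_def]
  simp only [one_pow, mul_one, coeff_toPolynomial]
  refine (Finset.sum_subset (fun i hi => ?_) fun i _ hi => ?_).symm
  · simpa [Finsupp.mem_support_iff] using hi
  · simpa using hi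

variable {B : Type*} [NonUnitalRing B] [Module k B]

def codRestrict (f : B →ₙₐ[k] A[X]) (hf : ∀ b i, (f b).coeff i ∈ S) : B →ₙₐ[k] NUPoly S :=
  let F : B → NUPoly S := fun b =>
    ⟨Finsupp.onFinset (f b).support (fun i => ⟨(f b).coeff i, hf b i⟩)
      fun _ h => mem_support_iff.2 fun h0 => h (Subtype.ext h0)⟩
  have hF (b : B) : toPolynomial S (F b) = f b := Polynomial.ext fun _ => rfl
  { toFun := F
    map_smul' c b := toPolynomial_injective <| by simp only [map_smul, hF]; rfl
    map_zero' := toPolynomial_injective <| by rw [hF, map_zero, map_zero]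
    map_add' a b := toPolynomial_injective <| by rw [map_add, hF, hF, hF, map_add]
    map_mul' a b := toPolynomial_injective <| by rw [map_mul, hF, hF, hF, map_mul] }

theorem coe_codRestrict_apply (f : B →ₙₐ[k] A[X]) (hf : ∀ b i, (f b).coeff i ∈ S) (b : B)
    (i : ℕ) : ((codRestrict f hf b).toFinsupp i : A) = (f b).coeff i :=
  rfl

theorem toPolynomial_codRestrict (f : B →ₙₐ[k] A[X]) (hf : ∀ b i, (f b).coeff i ∈ S) (b : B) :
    toPolynomial S (codRestrict f hf b) = f b :=
  Polynomial.ext (coe_codRestrict_apply f hf b)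

end NUPoly

namespace TensorAlgebra

section CommSemiring

variable (k : Type*) [CommSemiring k] {M : Type*} [AddCommMonoid M] [Module k M]

@[simp]
theorem algebraMapInv_ι (m : M) : algebraMapInv (ι k m) = 0 :=
  lift_ι_apply _ _

variable (M) in
def polyContraction : TensorAlgebra k M →ₐ[k] (TensorAlgebra k M)[X] :=
  lift k (LinearMap.mulRight k X ∘ₗ CAlgHom.toLinearMap ∘ₗ ι k)

@[simp]
theorem polyContraction_ι (m : M) : polyContraction k M (ι k m) = C (ι k m) * X :=
  lift_ι_apply _ _

variable {k}

theorem eq_polyContraction {τ : TensorAlgebra k M →ₐ[k] (TensorAlgebra k M)[X]}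
    (hτ : ∀ m, τ (ι k m) = C (ι k m) * X) : τ = polyContraction k M :=
  hom_ext <| LinearMap.ext fun m => by simp [hτ]

theorem eval_one_polyContraction (a : TensorAlgebra k M) :
    (polyContraction k M a).eval 1 = a := by
  have key : (eval₂AlgHom (AlgHom.id k _) 1 fun _ => Commute.one_right _).comp
      (polyContraction k M) = AlgHom.id k _ :=
    hom_ext <| LinearMap.ext fun m => by simp
  exact DFunLike.congr_fun key a

theorem coeff_zero_polyContraction (a : TensorAlgebra k M) :
    (polyContraction k M a).coeff 0 = algebraMap k _ (algebraMapInv a) := by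
  have key : (eval₂AlgHom (AlgHom.id k _) 0 fun _ => Commute.zero_right _).comp
      (polyContraction k M) = (Algebra.ofId k _).comp algebraMapInv :=
    hom_ext <| LinearMap.ext fun m => by simp
  rw [coeff_zero_eq_eval_zero]
  exact DFunLike.congr_fun key a

theorem map_algebraMapInv_polyContraction (a : TensorAlgebra k M) :
    (polyContraction k M a).map (algebraMapInv : TensorAlgebra k M →ₐ[k] k).toRingHom =
      C (algebraMapInv a) := by
  have key : (mapAlgHom algebraMapInv).comp (polyContraction k M) = CAlgHom.comp algebraMapInv :=
    hom_ext <| LinearMap.ext fun m => by simp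
  exact DFunLike.congr_fun key a

theorem map_lift_polyContraction {N : Type*} [AddCommMonoid N] [Module k N] (g : M →ₗ[k] N)
    (a : TensorAlgebra k M) :
    (polyContraction k M a).map (lift k ((ι k).comp g)).toRingHom =
      polyContraction k N (lift k ((ι k).comp g) a) := by
  have key : (mapAlgHom (lift k ((ι k).comp g))).comp (polyContraction k M) =
      (polyContraction k N).comp (lift k ((ι k).comp g)) :=
    hom_ext <| LinearMap.ext fun m => by simp
  exact DFunLike.congr_fun key a

end CommSemiring

variable {k : Type*} [CommRing k] {M : Type*} [AddCommGroup M] [Module k M]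

theorem coeff_polyContraction_mem_augIdeal {a : TensorAlgebra k M} (ha : a ∈ augIdeal k M)
    (i : ℕ) : (polyContraction k M a).coeff i ∈ augIdeal k M := by
  have hε := congr_arg (coeff · i) (map_algebraMapInv_polyContraction a)
  have ha' : algebraMapInv a = 0 := ha
  simp only [coeff_map, coeff_C, ha', ite_self] at hε
  exact hε

variable (k M) in
def augIdealContraction : augIdeal k M →ₙₐ[k] NUPoly (augIdeal k M) :=
  NUPoly.codRestrict
    ((polyContraction k M).toNonUnitalAlgHom.comp (NonUnitalSubalgebraClass.subtype _))
    fun a => coeff_polyContraction_mem_augIdeal a.2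

theorem toPolynomial_augIdealContraction (a : augIdeal k M) :
    NUPoly.toPolynomial _ (augIdealContraction k M a) = polyContraction k M a :=
  NUPoly.toPolynomial_codRestrict _ _ a

variable (k M)

theorem atZero_comp_augIdealContraction :
    (NUPoly.atZero k (augIdeal k M)).comp (augIdealContraction k M) = 0 :=
  NonUnitalAlgHom.ext fun a => Subtype.ext <| by
    rw [NonUnitalAlgHom.comp_apply, NUPoly.coe_atZero, toPolynomial_augIdealContraction,
      coeff_zero_polyContraction, show algebraMapInv (a : TensorAlgebra k M) = 0 from a.2,
      map_zero]
    rfl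

theorem coeffSum_comp_augIdealContraction :
    (NUPoly.coeffSum k (augIdeal k M)).comp (augIdealContraction k M) =
      NonUnitalAlgHom.id k (augIdeal k M) :=
  NonUnitalAlgHom.ext fun a => Subtype.ext <| by
    rw [NonUnitalAlgHom.comp_apply, NUPoly.coe_coeffSum, toPolynomial_augIdealContraction]
    exact eval_one_polyContraction (a : TensorAlgebra k M)

end TensorAlgebra

/-- Let `k` be a commutative ring and `M` a `k`-module.
There exists a (unique) `k`-algebra homomorphism
`τ : TensorAlgebra k M → Polynomial (TensorAlgebra k M)` with
`τ (ι m) = C (ι m) * X` for all `m : M`, and it satisfies: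
(i) for every `a`, the sum of the coefficients of `τ a` (evaluation at `X = 1`)
equals `a`;
(ii) the constant coefficient of `τ a` (evaluation at `X = 0`) equals
`algebraMap k (TensorAlgebra k M) (ε a)`, where `ε` is the augmentation.
In particular, for every `a ∈ ker ε`, the constant coefficient of `τ a` is `0`
while its coefficient sum is `a`, so `τ` is a polynomial contraction of
`ker ε`: the zero map and the identity of `ker ε` are elementary homotopic.
Moreover `τ` is natural: for every `k`-linear map `g : M → N` one has
`Polynomial.map (T g) ∘ τ_M = τ_N ∘ T g`, where `T g` is the induced algebra
homomorphism with `T g (ι m) = ι (g m)`. -/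
theorem tensorAlgebra_polynomial_contraction
    (k : Type*) [CommRing k] (M : Type*) [AddCommGroup M] [Module k M] :
    ∃ τ : TensorAlgebra k M →ₐ[k] Polynomial (TensorAlgebra k M),
      -- defining property
      (∀ m : M, τ (TensorAlgebra.ι k m)
        = Polynomial.C (TensorAlgebra.ι k m) * Polynomial.X) ∧
      -- uniqueness
      (∀ τ' : TensorAlgebra k M →ₐ[k] Polynomial (TensorAlgebra k M),
        (∀ m : M, τ' (TensorAlgebra.ι k m)
          = Polynomial.C (TensorAlgebra.ι k m) * Polynomial.X) → τ' = τ) ∧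
      -- (i)
      (∀ a : TensorAlgebra k M, (τ a).eval 1 = a) ∧
      -- (ii)
      (∀ a : TensorAlgebra k M,
        (τ a).coeff 0
          = algebraMap k (TensorAlgebra k M) (TensorAlgebra.algebraMapInv a)) ∧
      -- the contraction of the augmentation ideal induced by `τ`:
      -- zero and the identity of `ker ε` are elementary homotopic
      (∃ Hc : augIdeal k M →ₙₐ[k] NUPoly (augIdeal k M),
        (∀ (a : augIdeal k M) (i : ℕ),
          (((Hc a).toFinsupp i : augIdeal k M) : TensorAlgebra k M)
            = (τ (a : TensorAlgebra k M)).coeff i) ∧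
        (NUPoly.atZero k (augIdeal k M)).comp Hc = 0 ∧
        (NUPoly.coeffSum k (augIdeal k M)).comp Hc
          = NonUnitalAlgHom.id k (augIdeal k M)) ∧
      -- naturality
      (∀ (N : Type*) [AddCommGroup N] [Module k N] (g : M →ₗ[k] N)
        (τN : TensorAlgebra k N →ₐ[k] Polynomial (TensorAlgebra k N)),
        (∀ m : N, τN (TensorAlgebra.ι k m)
          = Polynomial.C (TensorAlgebra.ι k m) * Polynomial.X) →
        ∀ a : TensorAlgebra k M,
          Polynomial.map
            (TensorAlgebra.lift k ((TensorAlgebra.ι k (M := N)).comp g)).toRingHom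
            (τ a)
            = τN (TensorAlgebra.lift k ((TensorAlgebra.ι k (M := N)).comp g) a)) := by
  open TensorAlgebra in
  refine ⟨polyContraction k M, polyContraction_ι k, fun _ => eq_polyContraction,
    eval_one_polyContraction, coeff_zero_polyContraction,
    ⟨augIdealContraction k M, fun _ => NUPoly.coe_codRestrict_apply _ _ _,
      atZero_comp_augIdealContraction k M, coeffSum_comp_augIdealContraction k M⟩,
    fun N _ _ g τN hτN a => ?_⟩
  rw [eq_polyContraction hτN]
  exact map_lift_polyContraction g a
end
end

section
/- Fix n ≥ 0 and indices i < j in Fin (n+2). There exists a k-algebra homomorphism φ_{i,j} : Sₙ₊₁ → Polynomial Sₙ determined on the generators by φ_{i,j}(t_k) = C t_k for k < i; φ_{i,j}(t_i) = X·C t_i; φ_{i,j}(t_k) = X·C t_k + (1 − X)·C t_{k−1} for i < k < j; φ_{i,j}(t_j) = (1 − X)·C t_{j−1}; and φ_{i,j}(t_k) = C t_{k−1} for k > j. Moreover, evaluation at X = 0 composed with φ_{i,j} equals the face map ∂ᵢ, and evaluation at X = 1 composed with φ_{i,j} equals the face map ∂ⱼ. In particular any two face maps ∂ᵢ, ∂ⱼ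 : Sₙ₊₁ → Sₙ are elementarily (polynomially) homotopic. -/
/-!
A `k`-algebra map `Sₙ → A` is a point of `Aⁿ⁺¹` whose coordinates sum to `1`. Since that
condition is affine, any two such points `f, g` are joined by the line `X • g + (1 - X) • f`
over `A[X]`, a map `Sₙ → A[X]` restricting to `f` at `X = 0` and to `g` at `X = 1`. For the
face maps `f = ∂ᵢ`, `g = ∂ⱼ` this line is `φ_{i,j}`.
-/

noncomputable section

open MvPolynomial Polynomial

/-- The coordinate ring `Sₙ = k[Δⁿ]` of the algebraic `n`-simplex:
`k[t₀, …, tₙ] / (1 - Σᵢ tᵢ)`. -/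
abbrev SimplexAlg (k : Type*) [CommRing k] (n : ℕ) : Type _ :=
  MvPolynomial (Fin (n + 1)) k ⧸
    Ideal.span {(1 : MvPolynomial (Fin (n + 1)) k) - ∑ i : Fin (n + 1), MvPolynomial.X i}

/-- The generator `tᵢ` of `Sₙ` (the image of the variable `Xᵢ`). -/
def simplexVar (k : Type*) [CommRing k] (n : ℕ) (i : Fin (n + 1)) : SimplexAlg k n :=
  Ideal.Quotient.mk _ (MvPolynomial.X i)

/-- An index `m < i` of `Fin (n+2)` reindexed in `Fin (n+1)` (for the faces of the
`(n+1)`-simplex). -/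
def finOfLT {n : ℕ} (i m : Fin (n + 2)) (h : m < i) : Fin (n + 1) :=
  ⟨m.val, lt_of_lt_of_le h (Nat.lt_succ_iff.mp i.isLt)⟩

/-- The index `m - 1` of `Fin (n+1)`, for `m : Fin (n+2)`. -/
def finPred {n : ℕ} (m : Fin (n + 2)) : Fin (n + 1) :=
  ⟨m.val - 1, Nat.lt_succ_of_le (Nat.sub_le_sub_right (Nat.lt_succ_iff.mp m.isLt) 1)⟩

namespace SimplexAlg

variable {k : Type*} [CommRing k] {n : ℕ}

theorem sum_simplexVar : ∑ m, simplexVar k n m = 1 := by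
  have h : Ideal.Quotient.mk (Ideal.span {(1 : MvPolynomial (Fin (n + 1)) k) - ∑ m, X m})
      (1 - ∑ m, X m) = 0 :=
    Ideal.Quotient.eq_zero_iff_mem.mpr (Ideal.subset_span rfl)
  rw [map_sub, map_one, map_sum, sub_eq_zero] at h
  exact h.symm

variable {A : Type*} [CommRing A] [Algebra k A]

def lift (v : Fin (n + 1) → A) (hv : ∑ m, v m = 1) : SimplexAlg k n →ₐ[k] A :=
  Ideal.Quotient.liftₐ _ (aeval v) fun p hp => by
    obtain ⟨q, rfl⟩ := Ideal.mem_span_singleton'.mp hp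
    simp [hv]

@[simp]
theorem lift_simplexVar (v : Fin (n + 1) → A) (hv : ∑ m, v m = 1) (m : Fin (n + 1)) :
    lift v hv (simplexVar k n m) = v m :=
  (Ideal.Quotient.lift_mk _ _ _).trans (aeval_X v m)

@[ext]
theorem algHom_ext {f g : SimplexAlg k n →ₐ[k] A}
    (h : ∀ m, f (simplexVar k n m) = g (simplexVar k n m)) : f = g :=
  Ideal.Quotient.algHom_ext k (MvPolynomial.algHom_ext h)

def straightLineHomotopy (f g : SimplexAlg k n →ₐ[k] A) : SimplexAlg k n →ₐ[k] A[X] :=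
  lift (fun m => Polynomial.X * Polynomial.C (g (simplexVar k n m))
      + (1 - Polynomial.X) * Polynomial.C (f (simplexVar k n m))) (by
    simp only [Finset.sum_add_distrib, ← Finset.mul_sum, ← map_sum, sum_simplexVar, map_one]
    ring)

variable (f g : SimplexAlg k n →ₐ[k] A)

theorem straightLineHomotopy_simplexVar (m : Fin (n + 1)) :
    straightLineHomotopy f g (simplexVar k n m)
      = Polynomial.X * Polynomial.C (g (simplexVar k n m))
        + (1 - Polynomial.X) * Polynomial.C (f (simplexVar k n m)) :=
  lift_simplexVar _ _ m

theorem eval_zero_straightLineHomotopy (a : SimplexAlg k n) :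
    (straightLineHomotopy f g a).eval 0 = f a := by
  have h : ((Polynomial.aeval (0 : A)).restrictScalars k).comp (straightLineHomotopy f g) = f := by
    ext m
    simp [straightLineHomotopy_simplexVar]
  exact DFunLike.congr_fun h a

theorem eval_one_straightLineHomotopy (a : SimplexAlg k n) :
    (straightLineHomotopy f g a).eval 1 = g a := by
  have h : ((Polynomial.aeval (1 : A)).restrictScalars k).comp (straightLineHomotopy f g) = g := by
    ext m
    simp [straightLineHomotopy_simplexVar]
  exact DFunLike.congr_fun h a

end SimplexAlg

open SimplexAlg in
/-- Fix `n ≥ 0` and indices `i < j` in `Fin (n+2)`, and let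
`∂ᵢ, ∂ⱼ : Sₙ₊₁ → Sₙ` be the face maps, i.e. the `k`-algebra homomorphisms
determined on the generators by `∂ᵢ(t_m) = t_m` for `m < i`, `∂ᵢ(t_i) = 0`, and
`∂ᵢ(t_m) = t_{m-1}` for `m > i` (and similarly for `j`).  Then there exists a
`k`-algebra homomorphism `φ_{i,j} : Sₙ₊₁ → Polynomial Sₙ` determined on the
generators by
`φ(t_m) = C t_m` for `m < i`; `φ(t_i) = X · C t_i`;
`φ(t_m) = X · C t_m + (1 - X) · C t_{m-1}` for `i < m < j`;
`φ(t_j) = (1 - X) · C t_{j-1}`; `φ(t_m) = C t_{m-1}` for `m > j`;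
and evaluation at `X = 0` composed with `φ` equals `∂ᵢ`, while evaluation at
`X = 1` composed with `φ` equals `∂ⱼ`.  In particular any two face maps are
elementarily (polynomially) homotopic. -/
theorem simplex_face_maps_polynomially_homotopic
    (k : Type*) [CommRing k] (n : ℕ) (i j : Fin (n + 2)) (hij : i < j)
    (Fi Fj : SimplexAlg k (n + 1) →ₐ[k] SimplexAlg k n)
    -- `Fi` is the `i`-th face map:
    (hFi_lt : ∀ (m : Fin (n + 2)) (h : m < i),
      Fi (simplexVar k (n + 1) m) = simplexVar k n (finOfLT i m h))
    (hFi_eq : Fi (simplexVar k (n + 1) i) = 0)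
    (hFi_gt : ∀ (m : Fin (n + 2)), i < m →
      Fi (simplexVar k (n + 1) m) = simplexVar k n (finPred m))
    -- `Fj` is the `j`-th face map:
    (hFj_lt : ∀ (m : Fin (n + 2)) (h : m < j),
      Fj (simplexVar k (n + 1) m) = simplexVar k n (finOfLT j m h))
    (hFj_eq : Fj (simplexVar k (n + 1) j) = 0)
    (hFj_gt : ∀ (m : Fin (n + 2)), j < m →
      Fj (simplexVar k (n + 1) m) = simplexVar k n (finPred m)) :
    ∃ φ : SimplexAlg k (n + 1) →ₐ[k] Polynomial (SimplexAlg k n),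
      (∀ (m : Fin (n + 2)) (h : m < i),
        φ (simplexVar k (n + 1) m) = Polynomial.C (simplexVar k n (finOfLT i m h))) ∧
      (φ (simplexVar k (n + 1) i)
        = Polynomial.X * Polynomial.C (simplexVar k n (finOfLT j i hij))) ∧
      (∀ (m : Fin (n + 2)) (h₁ : i < m) (h₂ : m < j),
        φ (simplexVar k (n + 1) m)
          = Polynomial.X * Polynomial.C (simplexVar k n (finOfLT j m h₂))
            + (1 - Polynomial.X) * Polynomial.C (simplexVar k n (finPred m))) ∧
      (φ (simplexVar k (n + 1) j)
        = (1 - Polynomial.X) * Polynomial.C (simplexVar k n (finPred j))) ∧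
      (∀ (m : Fin (n + 2)), j < m →
        φ (simplexVar k (n + 1) m) = Polynomial.C (simplexVar k n (finPred m))) ∧
      (∀ a : SimplexAlg k (n + 1), (φ a).eval 0 = Fi a) ∧
      (∀ a : SimplexAlg k (n + 1), (φ a).eval 1 = Fj a) := by
  refine ⟨straightLineHomotopy Fi Fj, fun m h => ?_, ?_, fun m h₁ h₂ => ?_, ?_, fun m h => ?_,
    eval_zero_straightLineHomotopy Fi Fj, eval_one_straightLineHomotopy Fi Fj⟩ <;>
    rw [straightLineHomotopy_simplexVar]
  · rw [hFi_lt m h, hFj_lt m (h.trans hij), show finOfLT j m _ = finOfLT i m h from rfl]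
    ring
  · rw [hFi_eq, hFj_lt i hij, Polynomial.C_0, mul_zero, add_zero]
  · rw [hFi_gt m h₁, hFj_lt m h₂]
  · rw [hFj_eq, hFi_gt j hij, Polynomial.C_0, mul_zero, zero_add]
  · rw [hFi_gt m (hij.trans h), hFj_gt m h]
    ring
end
end

section
/- Let A be a simplicial unital k-algebra with underlying simplicial set X, and suppose there exists a 1-simplex t ∈ A₁ with d₀(t) = 0 and d₁(t) = 1. Then X is simplicially contractible to the vertex 0 ∈ A₀: there is a morphism of simplicial sets h : Δ[1] × X → X, given in degree n by h(α, a) = (α*(t))·a for α ∈ Δ[1]ₙ (i.e. α : [n] → [1]) and a ∈ Aₙ, whose restriction along the vertex 0 of Δ[1] is the identity of X and whose restriction along the vertex 1 of Δ[1] is the constant map at the vertex 0 ∈ A₀. -/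
/-! Multiplication by `α*(t)` is natural because the structure maps are algebra homomorphisms.
At a vertex `i` of `Δ[1]` the constant simplex factors through `A₀`, so `α*(t)` is a degeneracy
of `d₁ t = 1` for `i = 0` and of `d₀ t = 0` for `i = 1`. -/

open CategoryTheory Opposite

open SimplexCategory Simplicial

namespace SimplicialObject

variable {C : Type*} [Category C] {FC : C → C → Type*} {CC : C → Type*}
  [∀ X Y, FunLike (FC X Y) (CC X) (CC Y)] [ConcreteCategory C FC] (X : SimplicialObject C)

lemma map_const_op_apply (n : SimplexCategoryᵒᵖ) {m : ℕ} (i : Fin (m + 1))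
    (x : ToType (X _⦋m⦌)) :
    X.map (const n.unop ⦋m⦌ i).op x
      = X.map (const n.unop ⦋0⦌ 0).op (X.map (const ⦋0⦌ ⦋m⦌ i).op x) := by
  rw [const_fac_thru_zero, op_comp, X.map_comp, ConcreteCategory.comp_apply]

end SimplicialObject

namespace SimplicialAlgebra

variable {k : Type*} [CommRing k] (A : SimplexCategoryᵒᵖ ⥤ AlgCat k) (t : A _⦋1⦌)

def contraction (n : SimplexCategoryᵒᵖ) (α : n.unop ⟶ ⦋1⦌) (a : A.obj n) : A.obj n :=
  A.map α.op t * a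

lemma contraction_naturality {n m : SimplexCategoryᵒᵖ} (f : n ⟶ m) (α : n.unop ⟶ ⦋1⦌)
    (a : A.obj n) :
    contraction A t m (f.unop ≫ α) (A.map f a) = A.map f (contraction A t n α a) := by
  rw [contraction, contraction, map_mul, op_comp, A.map_comp, Quiver.Hom.op_unop,
    ConcreteCategory.comp_apply]

lemma contraction_const_zero (ht1 : A.map (δ (1 : Fin 2)).op t = 1) (n : SimplexCategoryᵒᵖ)
    (a : A.obj n) : contraction A t n (const n.unop ⦋1⦌ 0) a = a := by
  rw [contraction, SimplicialObject.map_const_op_apply A, ← δ_one_eq_const, ht1, map_one,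
    one_mul]

lemma contraction_const_one (ht0 : A.map (δ (0 : Fin 2)).op t = 0) (n : SimplexCategoryᵒᵖ)
    (a : A.obj n) :
    contraction A t n (const n.unop ⦋1⦌ 1) a = A.map (const n.unop ⦋0⦌ 0).op 0 := by
  rw [contraction, SimplicialObject.map_const_op_apply A, ← δ_zero_eq_const, ht0, map_zero,
    zero_mul]

end SimplicialAlgebra

/-- Let `A` be a simplicial unital `k`-algebra (a functor
`SimplexCategoryᵒᵖ ⥤ AlgebraCat k`) and suppose there exists a `1`-simplex
`t ∈ A₁` with `d₀ t = 0` and `d₁ t = 1`.  Then the underlying simplicial set of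
`A` is simplicially contractible to the vertex `0 ∈ A₀`: there is a morphism of
simplicial sets `h : Δ[1] × X → X`, given in degree `n` by
`h (α, a) = (α* t) * a` for `α : [n] ⟶ [1]` and `a ∈ Aₙ` (here encoded as a
family of maps `(n.unop ⟶ [1]) → A.obj n → A.obj n` natural in
`n : SimplexCategoryᵒᵖ`), whose restriction along the vertex `0` of `Δ[1]` is
the identity and whose restriction along the vertex `1` of `Δ[1]` is the
constant map at the vertex `0 ∈ A₀`. -/
theorem simplicial_algebra_contractible
    (k : Type*) [CommRing k]
    (A : SimplexCategoryᵒᵖ ⥤ AlgCat k)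
    (t : A.obj (op (SimplexCategory.mk 1)))
    (ht0 : A.map (SimplexCategory.δ (0 : Fin 2)).op t = 0)
    (ht1 : A.map (SimplexCategory.δ (1 : Fin 2)).op t = 1) :
    ∃ h : ∀ n : SimplexCategoryᵒᵖ, (n.unop ⟶ SimplexCategory.mk 1) → A.obj n → A.obj n,
      -- the defining formula `h (α, a) = (α* t) * a`
      (∀ (n : SimplexCategoryᵒᵖ) (α : n.unop ⟶ SimplexCategory.mk 1) (a : A.obj n),
        h n α a = A.map α.op t * a) ∧
      -- `h` is a morphism of simplicial sets `Δ[1] × X → X` (naturality)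
      (∀ (n m : SimplexCategoryᵒᵖ) (f : n ⟶ m) (α : n.unop ⟶ SimplexCategory.mk 1)
        (a : A.obj n),
        h m (f.unop ≫ α) (A.map f a) = A.map f (h n α a)) ∧
      -- restriction along the vertex `0` of `Δ[1]` is the identity of `X`
      (∀ (n : SimplexCategoryᵒᵖ) (a : A.obj n),
        h n (SimplexCategory.const n.unop (SimplexCategory.mk 1) 0) a = a) ∧
      -- restriction along the vertex `1` of `Δ[1]` is constant at the vertex `0 ∈ A₀`
      (∀ (n : SimplexCategoryᵒᵖ) (a : A.obj n),
        h n (SimplexCategory.const n.unop (SimplexCategory.mk 1) 1) a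
          = A.map (SimplexCategory.const n.unop (SimplexCategory.mk 0) 0).op
              (0 : A.obj (op (SimplexCategory.mk 0)))) :=
  ⟨SimplicialAlgebra.contraction A t, fun _ _ _ => rfl,
    fun _ _ => SimplicialAlgebra.contraction_naturality A t,
    SimplicialAlgebra.contraction_const_zero A t ht1,
    SimplicialAlgebra.contraction_const_one A t ht0⟩
end
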